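/- arXiv:1511.07837 — 2 statements merged into one kernel-verified Lean document; each statement's English description precedes it below -/
import Mathlib

section
/- Let A be an n×n symmetric positive definite matrix, b ∈ ℝⁿ, τ ≥ 0, and F(x) = (1/2)xᵀAx − bᵀx + τ‖x‖₁. For x ∈ ℝⁿ let I₀(x) = {i : xᵢ = 0}, J = {i : xᵢ ≠ 0}, H(x) = {y ∈ ℝⁿ : yᵢ = 0 for i ∈ I₀(x)}, and F*_x = min{F(y) : y ∈ H(x)}. Let v(x) be the minimum-norm subgradient of F at x. Then F(x) − F*_x ≤ (‖A⁻¹‖/2) ‖[v(x)]_J‖² for all x ∈ ℝⁿ. -/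
open Matrix Finset

/-- `f(x) = (1/2) xᵀAx − bᵀx`. -/
noncomputable def quadObj {n : ℕ} (A : Matrix (Fin n) (Fin n) ℝ) (b : Fin n → ℝ)
    (x : Fin n → ℝ) : ℝ :=
  (1 / 2) * (x ⬝ᵥ A.mulVec x) - b ⬝ᵥ x

/-- `F(x) = (1/2) xᵀAx − bᵀx + τ‖x‖₁`. -/
noncomputable def l1QuadObj {n : ℕ} (A : Matrix (Fin n) (Fin n) ℝ) (b : Fin n → ℝ)
    (τ : ℝ) (x : Fin n → ℝ) : ℝ :=
  quadObj A b x + τ * ∑ i, |x i|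

/-- The minimum-norm subgradient `v(x)` of `F`, given componentwise. -/
noncomputable def minSubgrad {n : ℕ} (A : Matrix (Fin n) (Fin n) ℝ) (b : Fin n → ℝ)
    (τ : ℝ) (x : Fin n → ℝ) : Fin n → ℝ := fun i =>
  if x i ≠ 0 then (A.mulVec x - b) i + τ * Real.sign (x i)
  else min ((A.mulVec x - b) i + τ) (max 0 ((A.mulVec x - b) i - τ))

/-- `F*_x = min{F(y) : yᵢ = 0 whenever xᵢ = 0}`. -/
noncomputable def faceOpt {n : ℕ} (A : Matrix (Fin n) (Fin n) ℝ) (b : Fin n → ℝ)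
    (τ : ℝ) (x : Fin n → ℝ) : ℝ :=
  sInf (l1QuadObj A b τ '' {y | ∀ i, x i = 0 → y i = 0})

/-!
Since `τ sgn(xᵢ)` is a subgradient of `τ|·|` at `xᵢ` (also at `xᵢ = 0`, where `sgn 0 = 0`), expanding
the quadratic part gives `F(x + z) ≥ F(x) + (∇f(x) + τ sgn x) ⬝ z + ½ zᵀAz` for every `z`. On the face
`H(x)` the direction `z` is supported on `J`, so the linear term is `g ⬝ z` with `g` equal to `v(x)` on `J`
and `0` off `J`. Minimising over all `z` (completing the square) gives
`F(y) ≥ F(x) − ½ gᵀA⁻¹g ≥ F(x) − ½‖A⁻¹‖‖g‖²`.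
-/

theorem Real.abs_add_sign_mul_sub_le_abs (x y : ℝ) : |x| + Real.sign x * (y - x) ≤ |y| := by
  rcases lt_trichotomy x 0 with hx | rfl | hx
  · rw [Real.sign_of_neg hx, abs_of_neg hx]
    linarith [neg_abs_le y]
  · simp
  · rw [Real.sign_of_pos hx, abs_of_pos hx]
    linarith [le_abs_self y]

namespace Matrix

variable {n : Type*} [Fintype n]

theorem IsSymm.dotProduct_mulVec_comm {A : Matrix n n ℝ} (hA : A.IsSymm) (u w : n → ℝ) :
    u ⬝ᵥ A *ᵥ w = w ⬝ᵥ A *ᵥ u := by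
  rw [← dotProduct_transpose_mulVec, hA.eq]

variable [DecidableEq n]

theorem dotProduct_toEuclideanCLM_mulVec_le (M : Matrix n n ℝ) (v : n → ℝ) :
    v ⬝ᵥ M *ᵥ v ≤ ‖toEuclideanCLM (𝕜 := ℝ) M‖ * ∑ i, v i ^ 2 := by
  set V : EuclideanSpace ℝ n := WithLp.toLp 2 v
  have hnorm : ‖V‖ ^ 2 = ∑ i, v i ^ 2 := by simp [V, EuclideanSpace.real_norm_sq_eq]
  calc v ⬝ᵥ M *ᵥ v = inner ℝ (toEuclideanCLM (𝕜 := ℝ) M V) V := by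
        rw [real_inner_comm, inner_toEuclideanCLM]
    _ ≤ ‖toEuclideanCLM (𝕜 := ℝ) M V‖ * ‖V‖ := real_inner_le_norm _ _
    _ ≤ ‖toEuclideanCLM (𝕜 := ℝ) M‖ * ‖V‖ * ‖V‖ := by
        gcongr; exact (toEuclideanCLM (𝕜 := ℝ) M).le_opNorm V
    _ = ‖toEuclideanCLM (𝕜 := ℝ) M‖ * ∑ i, v i ^ 2 := by rw [mul_assoc, ← sq, hnorm]

theorem PosDef.neg_half_dotProduct_inv_mulVec_le {A : Matrix n n ℝ} (hA : A.PosDef)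
    (v z : n → ℝ) : -(1 / 2) * (v ⬝ᵥ A⁻¹ *ᵥ v) ≤ v ⬝ᵥ z + (1 / 2) * (z ⬝ᵥ A *ᵥ z) := by
  have hsymm : A.IsSymm := isHermitian_iff_isSymm.mp hA.isHermitian
  have hAinv : A *ᵥ (A⁻¹ *ᵥ v) = v := by
    rw [mulVec_mulVec, mul_nonsing_inv A ((isUnit_iff_isUnit_det A).mp hA.isUnit), one_mulVec]
  have hsquare : 0 ≤ (z + A⁻¹ *ᵥ v) ⬝ᵥ A *ᵥ (z + A⁻¹ *ᵥ v) := by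
    simpa using hA.posSemidef.dotProduct_mulVec_nonneg (z + A⁻¹ *ᵥ v)
  have hcross : (A⁻¹ *ᵥ v) ⬝ᵥ A *ᵥ z = v ⬝ᵥ z := by
    rw [hsymm.dotProduct_mulVec_comm, hAinv, dotProduct_comm]
  rw [mulVec_add, dotProduct_add, add_dotProduct, add_dotProduct, hAinv, hcross,
    dotProduct_comm z v, dotProduct_comm (A⁻¹ *ᵥ v) v] at hsquare
  linarith

end Matrix

variable {n : ℕ} {A : Matrix (Fin n) (Fin n) ℝ} {b : Fin n → ℝ} {τ : ℝ}

theorem quadObj_add (hA : A.IsSymm) (x z : Fin n → ℝ) :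
    quadObj A b (x + z) = quadObj A b x + (A *ᵥ x - b) ⬝ᵥ z + (1 / 2) * (z ⬝ᵥ A *ᵥ z) := by
  have hxz : x ⬝ᵥ A *ᵥ z = (A *ᵥ x) ⬝ᵥ z := by
    rw [hA.dotProduct_mulVec_comm, dotProduct_comm]
  have hzx : z ⬝ᵥ A *ᵥ x = (A *ᵥ x) ⬝ᵥ z := dotProduct_comm _ _
  simp only [quadObj, mulVec_add, dotProduct_add, add_dotProduct, sub_dotProduct, hxz, hzx]
  ring

theorem l1QuadObj_add_ge (hA : A.IsSymm) (hτ : 0 ≤ τ) (x z : Fin n → ℝ) :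
    l1QuadObj A b τ x + (A *ᵥ x - b + τ • fun i => Real.sign (x i)) ⬝ᵥ z
      + (1 / 2) * (z ⬝ᵥ A *ᵥ z) ≤ l1QuadObj A b τ (x + z) := by
  have hl1 : τ * ∑ i, |x i| + (τ • fun i => Real.sign (x i)) ⬝ᵥ z ≤ τ * ∑ i, |x i + z i| := by
    simp only [dotProduct, Pi.smul_apply, smul_eq_mul, mul_sum, ← sum_add_distrib]
    gcongr with i
    have := Real.abs_add_sign_mul_sub_le_abs (x i) (x i + z i)
    rw [add_sub_cancel_left] at this
    nlinarith
  rw [l1QuadObj, l1QuadObj, quadObj_add hA, add_dotProduct]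
  simp only [Pi.add_apply]
  linarith

theorem subgrad_dotProduct_eq_indicator_minSubgrad_dotProduct {x z : Fin n → ℝ}
    (hz : ∀ i, x i = 0 → z i = 0) :
    (A *ᵥ x - b + τ • fun i => Real.sign (x i)) ⬝ᵥ z
      = (Function.support x).indicator (minSubgrad A b τ x) ⬝ᵥ z := by
  refine sum_congr rfl fun i _ => ?_
  by_cases hx : x i = 0
  · simp [hz i hx]
  · simp [minSubgrad, hx]

/-- for `A` symmetric positive definite,
`F(x) − F*_x ≤ (‖A⁻¹‖/2) ‖[v(x)]_J‖²` with `J = supp(x)`,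
where `‖A⁻¹‖` is the spectral norm of `A⁻¹`. -/
theorem stmt3 {n : ℕ} (A : Matrix (Fin n) (Fin n) ℝ) (b : Fin n → ℝ) (τ : ℝ)
    (hA : A.PosDef) (hτ : 0 ≤ τ) :
    ∀ x : Fin n → ℝ,
      l1QuadObj A b τ x - faceOpt A b τ x ≤
        ‖Matrix.toEuclideanCLM (𝕜 := ℝ) A⁻¹‖ / 2 *
          ∑ i ∈ univ.filter (fun i => x i ≠ 0), (minSubgrad A b τ x i) ^ 2 := by
  intro x
  set g := (Function.support x).indicator (minSubgrad A b τ x)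
  have hsum : ∑ i ∈ univ.filter (fun i => x i ≠ 0), minSubgrad A b τ x i ^ 2
      = ∑ i, g i ^ 2 := by
    rw [sum_filter]
    refine sum_congr rfl fun i _ => ?_
    by_cases hx : x i = 0 <;> simp [g, hx]
  rw [hsum, sub_le_comm]
  refine le_csInf ⟨_, x, fun _ h => h, rfl⟩ ?_
  rintro _ ⟨y, hy, rfl⟩
  have hface : ∀ i, x i = 0 → (y - x) i = 0 := fun i hx => by simp [hx, hy i hx]
  calc l1QuadObj A b τ x - ‖toEuclideanCLM (𝕜 := ℝ) A⁻¹‖ / 2 * ∑ i, g i ^ 2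
      ≤ l1QuadObj A b τ x - (1 / 2) * (g ⬝ᵥ A⁻¹ *ᵥ g) := by
        linarith [dotProduct_toEuclideanCLM_mulVec_le A⁻¹ g]
    _ ≤ l1QuadObj A b τ x + g ⬝ᵥ (y - x) + (1 / 2) * ((y - x) ⬝ᵥ A *ᵥ (y - x)) := by
        linarith [hA.neg_half_dotProduct_inv_mulVec_le g (y - x)]
    _ = l1QuadObj A b τ x + (A *ᵥ x - b + τ • fun i => Real.sign (x i)) ⬝ᵥ (y - x)
          + (1 / 2) * ((y - x) ⬝ᵥ A *ᵥ (y - x)) := by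
        rw [subgrad_dotProduct_eq_indicator_minSubgrad_dotProduct hface]
    _ ≤ l1QuadObj A b τ (x + (y - x)) :=
        l1QuadObj_add_ge (isHermitian_iff_isSymm.mp hA.isHermitian) hτ x (y - x)
    _ = l1QuadObj A b τ y := by rw [add_sub_cancel]
end

section
/- Let F(x) = f(x) + τ‖x‖₁ with f(x) = (1/2)xᵀAx − bᵀx, A symmetric positive semidefinite. Let v(x) be the minimum-norm subgradient of F at x and let v_p(x) be its projection onto {y : yᵢ = 0 for all i with xᵢ ≠ 0} (i.e., (v_p(x))ᵢ = vᵢ(x) if xᵢ = 0, else 0). Suppose v_p(x) ≠ 0. Then (v_p(x))ᵀ A v_p(x) > 0, and with α* = ‖v_p(x)‖²/((v_p(x))ᵀ A v_p(x)) and x⁺ = x − α* v_p(x), one has F(x⁺) = F(x) − ‖v_p(x)‖⁴ / (2 (v_p(x))ᵀ A v_p(x)) ≤ F(x) − ‖v_p(x)‖²/(2‖A‖). -/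
open Matrix

/-- The projected minimum-norm subgradient `v_p(x)`: `v(x)` on `I₀(x)`, zero elsewhere. -/
noncomputable def projMinSubgrad {n : ℕ} (A : Matrix (Fin n) (Fin n) ℝ) (b : Fin n → ℝ)
    (τ : ℝ) (x : Fin n → ℝ) : Fin n → ℝ := fun i =>
  if x i = 0 then minSubgrad A b τ x i else 0

/-!
Coordinates where `x` is nonzero are left untouched by the direction `-v_p(x)`, so `‖·‖₁` is
affine along it and `F(x - α v_p) = F(x) - α ‖v_p‖² + α²/2 · v_pᵀ A v_p` for `α ≥ 0`; the slope comes
from the soft-thresholding identity `∇ᵢf(x) vᵢ = vᵢ² + τ |vᵢ|`. If the curvature `v_pᵀ A v_p` vanished,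
`F` would be unbounded below, so it is positive; minimizing the parabola gives the exact decrease,
and `v_pᵀ A v_p ≤ ‖A‖ ‖v_p‖²` turns it into the bound.
-/

lemma dotProduct_self_pos {ι R : Type*} [Fintype ι] [Ring R] [LinearOrder R] [IsStrictOrderedRing R]
    {v : ι → R} (hv : v ≠ 0) : 0 < v ⬝ᵥ v :=
  (Finset.sum_nonneg fun i _ => mul_self_nonneg (v i)).lt_of_ne' (dotProduct_self_eq_zero.not.mpr hv)

lemma dotProduct_mulVec_le_l2_opNorm_mul {ι : Type*} [Fintype ι] [DecidableEq ι]
    (A : Matrix ι ι ℝ) (v : ι → ℝ) :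
    v ⬝ᵥ A *ᵥ v ≤ ‖toEuclideanCLM (𝕜 := ℝ) A‖ * (v ⬝ᵥ v) := by
  set u := WithLp.toLp 2 v
  have hnorm : ‖u‖ ^ 2 = v ⬝ᵥ v := by
    rw [← real_inner_self_eq_norm_sq, EuclideanSpace.inner_toLp_toLp, star_trivial]
  calc v ⬝ᵥ A *ᵥ v = inner ℝ u (toEuclideanCLM (𝕜 := ℝ) A u) := (inner_toEuclideanCLM A u u).symm
    _ ≤ ‖u‖ * ‖toEuclideanCLM (𝕜 := ℝ) A u‖ := real_inner_le_norm _ _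
    _ ≤ ‖u‖ * (‖toEuclideanCLM (𝕜 := ℝ) A‖ * ‖u‖) := by
      gcongr; exact ContinuousLinearMap.le_opNorm _ u
    _ = ‖toEuclideanCLM (𝕜 := ℝ) A‖ * (v ⬝ᵥ v) := by rw [← hnorm]; ring

/-- `min (g + τ) (max 0 (g - τ))` is the soft-thresholding of `g` at level `τ`. -/
lemma mul_min_add_max_sub {g τ : ℝ} (hτ : 0 ≤ τ) :
    g * min (g + τ) (max 0 (g - τ)) =
      min (g + τ) (max 0 (g - τ)) ^ 2 + τ * |min (g + τ) (max 0 (g - τ))| := by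
  rcases le_or_gt g (-τ) with hlow | hlow
  · rw [min_eq_left (by linarith [le_max_left 0 (g - τ)]), abs_of_nonpos (by linarith)]
    ring
  rcases le_or_gt g τ with hmid | hhigh
  · simp [max_eq_left (by linarith : g - τ ≤ 0), min_eq_right (by linarith : 0 ≤ g + τ)]
  · rw [max_eq_right (by linarith), min_eq_right (by linarith), abs_of_pos (by linarith)]
    ring

lemma sum_abs_sub_smul {ι : Type*} [Fintype ι] {x y : ι → ℝ} (hxy : ∀ i, x i = 0 ∨ y i = 0)
    {α : ℝ} (hα : 0 ≤ α) : ∑ i, |(x - α • y) i| = ∑ i, |x i| + α * ∑ i, |y i| := by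
  rw [Finset.mul_sum, ← Finset.sum_add_distrib]
  refine Finset.sum_congr rfl fun i _ => ?_
  rcases hxy i with hx | hy
  · simp [hx, abs_mul, abs_of_nonneg hα]
  · simp [hy]

section

variable {n : ℕ} (A : Matrix (Fin n) (Fin n) ℝ) (b : Fin n → ℝ) {τ : ℝ} (x : Fin n → ℝ)

lemma quadObj_sub (hA : A.IsSymm) (y : Fin n → ℝ) :
    quadObj A b (x - y) = quadObj A b x - (A *ᵥ x - b) ⬝ᵥ y + 1 / 2 * (y ⬝ᵥ A *ᵥ y) := by
  have hxy : x ⬝ᵥ A *ᵥ y = y ⬝ᵥ A *ᵥ x := by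
    rw [dotProduct_mulVec, ← mulVec_transpose, hA.eq, dotProduct_comm]
  simp only [quadObj, mulVec_sub, dotProduct_sub, sub_dotProduct, dotProduct_comm b,
    dotProduct_comm (A *ᵥ x)]
  linear_combination (-1 / 2 : ℝ) * hxy

lemma projMinSubgrad_eq_zero_or (i : Fin n) : x i = 0 ∨ projMinSubgrad A b τ x i = 0 := by
  by_cases hx : x i = 0
  · exact .inl hx
  · simp [projMinSubgrad, hx]

lemma sub_dotProduct_projMinSubgrad (hτ : 0 ≤ τ) :
    (A *ᵥ x - b) ⬝ᵥ projMinSubgrad A b τ x =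
      projMinSubgrad A b τ x ⬝ᵥ projMinSubgrad A b τ x + τ * ∑ i, |projMinSubgrad A b τ x i| := by
  simp only [dotProduct, Finset.mul_sum, ← Finset.sum_add_distrib]
  refine Finset.sum_congr rfl fun i _ => ?_
  by_cases hx : x i = 0
  · simpa [projMinSubgrad, minSubgrad, hx, sq] using mul_min_add_max_sub (g := (A *ᵥ x - b) i) hτ
  · simp [projMinSubgrad, hx]

lemma l1QuadObj_sub_smul_projMinSubgrad (hA : A.IsSymm) (hτ : 0 ≤ τ) {α : ℝ} (hα : 0 ≤ α) :
    l1QuadObj A b τ (x - α • projMinSubgrad A b τ x) =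
      l1QuadObj A b τ x - α * (projMinSubgrad A b τ x ⬝ᵥ projMinSubgrad A b τ x) +
        α ^ 2 / 2 * (projMinSubgrad A b τ x ⬝ᵥ A *ᵥ projMinSubgrad A b τ x) := by
  rw [l1QuadObj, quadObj_sub A b x hA, sum_abs_sub_smul (projMinSubgrad_eq_zero_or A b x) hα,
    dotProduct_smul, sub_dotProduct_projMinSubgrad A b x hτ, l1QuadObj]
  simp only [mulVec_smul, dotProduct_smul, smul_dotProduct, smul_eq_mul]
  ring

lemma projMinSubgrad_dotProduct_mulVec_pos (hA : A.PosSemidef) (hτ : 0 ≤ τ)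
    (hbdd : ∃ xs, ∀ y, l1QuadObj A b τ xs ≤ l1QuadObj A b τ y)
    (hvp : projMinSubgrad A b τ x ≠ 0) :
    0 < projMinSubgrad A b τ x ⬝ᵥ A *ᵥ projMinSubgrad A b τ x := by
  set v := projMinSubgrad A b τ x
  obtain ⟨xs, hxs⟩ := hbdd
  have hs := dotProduct_self_pos hvp
  refine (by simpa using hA.dotProduct_mulVec_nonneg v : 0 ≤ v ⬝ᵥ A *ᵥ v).lt_of_ne' fun hq => ?_
  -- with zero curvature, `F` drops linearly along `-v` and passes below its minimum value
  set α := (l1QuadObj A b τ x - l1QuadObj A b τ xs + 1) / (v ⬝ᵥ v)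
  have hαs : α * (v ⬝ᵥ v) = l1QuadObj A b τ x - l1QuadObj A b τ xs + 1 :=
    div_mul_cancel₀ _ hs.ne'
  have hα : 0 ≤ α := div_nonneg (by linarith [hxs x]) hs.le
  have hbelow := hxs (x - α • v)
  rw [l1QuadObj_sub_smul_projMinSubgrad A b x (isHermitian_iff_isSymm.mp hA.isHermitian) hτ hα,
    hq, hαs] at hbelow
  linarith

end

/-- exact line search along `−v_p(x)`: if `v_p(x) ≠ 0` then
`v_p(x)ᵀ A v_p(x) > 0` and with `α* = ‖v_p‖²/(v_pᵀAv_p)`, `x⁺ = x − α* v_p`,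
`F(x⁺) = F(x) − ‖v_p‖⁴/(2 v_pᵀAv_p) ≤ F(x) − ‖v_p‖²/(2‖A‖)`. -/
theorem stmt4 {n : ℕ} (A : Matrix (Fin n) (Fin n) ℝ) (b : Fin n → ℝ) (τ : ℝ)
    (hA : A.PosSemidef) (hτ : 0 ≤ τ)
    (hbdd : ∃ xs, ∀ y, l1QuadObj A b τ xs ≤ l1QuadObj A b τ y)
    (x : Fin n → ℝ)
    (hvp : projMinSubgrad A b τ x ≠ 0) :
    0 < projMinSubgrad A b τ x ⬝ᵥ A.mulVec (projMinSubgrad A b τ x) ∧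
    (l1QuadObj A b τ
        (x - ((projMinSubgrad A b τ x ⬝ᵥ projMinSubgrad A b τ x) /
            (projMinSubgrad A b τ x ⬝ᵥ A.mulVec (projMinSubgrad A b τ x))) •
            projMinSubgrad A b τ x) =
      l1QuadObj A b τ x -
        (projMinSubgrad A b τ x ⬝ᵥ projMinSubgrad A b τ x) ^ 2 /
          (2 * (projMinSubgrad A b τ x ⬝ᵥ A.mulVec (projMinSubgrad A b τ x)))) ∧
    l1QuadObj A b τ
        (x - ((projMinSubgrad A b τ x ⬝ᵥ projMinSubgrad A b τ x) /
            (projMinSubgrad A b τ x ⬝ᵥ A.mulVec (projMinSubgrad A b τ x))) •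
            projMinSubgrad A b τ x) ≤
      l1QuadObj A b τ x -
        (projMinSubgrad A b τ x ⬝ᵥ projMinSubgrad A b τ x) /
          (2 * ‖Matrix.toEuclideanCLM (𝕜 := ℝ) A‖) := by
  have hq := projMinSubgrad_dotProduct_mulVec_pos A b x hA hτ hbdd hvp
  have hs := dotProduct_self_pos hvp
  have hstep := l1QuadObj_sub_smul_projMinSubgrad A b x (isHermitian_iff_isSymm.mp hA.isHermitian)
    hτ (div_nonneg hs.le hq.le)
  set v := projMinSubgrad A b τ x
  set s := v ⬝ᵥ v
  set q := v ⬝ᵥ A *ᵥ v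
  have hdecrease : l1QuadObj A b τ (x - (s / q) • v) = l1QuadObj A b τ x - s ^ 2 / (2 * q) := by
    rw [hstep]; field_simp; ring
  refine ⟨hq, hdecrease, ?_⟩
  have hqN := dotProduct_mulVec_le_l2_opNorm_mul A v
  have hN : 0 < ‖toEuclideanCLM (𝕜 := ℝ) A‖ := pos_of_mul_pos_left (hq.trans_le hqN) hs.le
  rw [hdecrease, sub_le_sub_iff_left, div_le_div_iff₀ (by positivity) (by positivity)]
  nlinarith [mul_le_mul_of_nonneg_left hqN hs.le]
end
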